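/- (Theorem 2 inequality) Let C(x) = log₂(1+x) and γ₁₁, γ₁₂, γ₂₁, γ₂₂ > 0. The strict inequality C(γ₁₁/(γ₂₁+1)) + C(γ₂₂/(γ₁₂+1)) > C(γ₁₁ + γ₂₁) holds if and only if γ₂₁/γ₂₂ < 1/(γ₁₂+1). -/

import Mathlib

open Real

/-- C(x) = log₂(1+x) -/
noncomputable def Cap (x : ℝ) : ℝ := Real.logb 2 (1 + x)

/-! The rate of the first user with the second one's signal treated as noise is what remains of
the joint rate `C(γ₁₁ + γ₂₁)` after decoding the second signal first:
`C(γ₁₁/(γ₂₁+1)) = C(γ₁₁ + γ₂₁) - C(γ₂₁)`. Hence the inequality reduces to `C(γ₂₁) < C(γ₂₂/(γ₁₂+1))`,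
and by monotonicity of `C` to `γ₂₁ < γ₂₂/(γ₁₂+1)`. -/

theorem Cap_div_add_one {a c : ℝ} (hc : 1 + c ≠ 0) (hac : 1 + (a + c) ≠ 0) :
    Cap (a / (c + 1)) = Cap (a + c) - Cap c := by
  have hc' : c + 1 ≠ 0 := by rwa [add_comm]
  have hquot : 1 + a / (c + 1) = (1 + (a + c)) / (1 + c) := by
    field_simp
    ring
  rw [Cap, Cap, Cap, hquot, Real.logb_div hac hc]

theorem Cap_lt_Cap_iff {x y : ℝ} (hx : -1 < x) (hy : -1 < y) : Cap x < Cap y ↔ x < y := by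
  rw [Cap, Cap, Real.logb_lt_logb_iff one_lt_two (by linarith) (by linarith)]
  exact add_lt_add_iff_left 1

/-- (Theorem 2 inequality) C(γ₁₁/(γ₂₁+1)) + C(γ₂₂/(γ₁₂+1)) > C(γ₁₁+γ₂₁)
holds if and only if γ₂₁/γ₂₂ < 1/(γ₁₂+1). -/
theorem sum_rate_improvement_iff (γ11 γ12 γ21 γ22 : ℝ)
    (h11 : 0 < γ11) (h12 : 0 < γ12) (h21 : 0 < γ21) (h22 : 0 < γ22) :
    Cap (γ11 / (γ21 + 1)) + Cap (γ22 / (γ12 + 1)) > Cap (γ11 + γ21) ↔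
    γ21 / γ22 < 1 / (γ12 + 1) := by
  have hb : 0 < γ12 + 1 := by linarith
  rw [Cap_div_add_one (by linarith) (by linarith), gt_iff_lt, sub_add_comm, lt_add_iff_pos_left,
    sub_pos, Cap_lt_Cap_iff (by linarith) (by linarith [div_pos h22 hb]), lt_div_iff₀ hb,
    div_lt_div_iff₀ h22 hb, one_mul]
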